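/- arXiv:1901.10571 — 2 statements merged into one kernel-verified Lean document; each statement's English description precedes it below -/
import Mathlib

section
/- Any non-zero strongly admissible pattern p can be decomposed into a sum p = p₁ + q₁ + p₂ + q₂ + ⋯ + p_m + q_m (in consecutive blocks of variables), where for each i ∈ {1,…,m} all coefficients of the pattern pᵢ are positive, and the pattern qᵢ is admissible with coefficients summing to zero. -/
/-- A numerical semigroup: an additive submonoid of ℕ with finite complement. -/
def IsNumericalSemigroup (S : Set ℕ) : Prop :=
  0 ∈ S ∧ (∀ a ∈ S, ∀ b ∈ S, a + b ∈ S) ∧ Sᶜ.Finite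

/-- Evaluation of a pattern (list of coefficients a₁,…,aₙ) at s₁,…,sₙ. -/
def patEval (p : List ℤ) (s : ℕ → ℕ) : ℤ :=
  ∑ i ∈ Finset.range p.length, p.getD i 0 * (s i : ℤ)

/-- `S` admits the pattern `p`: p(s₁,…,sₙ) ∈ S for all s₁ ≥ ⋯ ≥ sₙ in S. -/
def AdmitsPat (S : Set ℕ) (p : List ℤ) : Prop :=
  ∀ s : ℕ → ℕ, (∀ i, s i ∈ S) → (∀ i j, i ≤ j → s j ≤ s i) →
    ∃ m ∈ S, (m : ℤ) = patEval p s

/-- A pattern is admissible if it is admitted by some numerical semigroup. -/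
def Admissible (p : List ℤ) : Prop :=
  ∃ S : Set ℕ, IsNumericalSemigroup S ∧ AdmitsPat S p

/-- The derivative p' of a pattern. -/
def pderiv : List ℤ → List ℤ
  | [] => []
  | a :: q => if a = 1 then q else (a - 1) :: q

/-- The admissibility degree: least k such that p⁽ᵏ⁾ is not admissible, or ∞. -/
noncomputable def adDeg (p : List ℤ) : ℕ∞ :=
  sInf ((fun m : ℕ => (m : ℕ∞)) '' {m : ℕ | ¬ Admissible (pderiv^[m] p)})

/-- The partial sum bᵢ = a₁ + ⋯ + aᵢ of the coefficients of `p`. -/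
def psum (p : List ℤ) (i : ℕ) : ℤ :=
  ∑ j ∈ Finset.range i, p.getD j 0

/-- The i-th coefficient aᵢ of `p` (1-indexed), zero outside {1,…,n}. -/
def coeffFn (p : List ℤ) (i : ℕ) : ℤ :=
  if i = 0 then 0 else p.getD (i - 1) 0

/-!
If `p'` is admissible then every partial sum `bₖ` of `p` with `1 ≤ k ≤ n` is at least `1`, since
`bₖ - 1` is a partial sum of `p'`. Given a coefficient sequence whose partial sums `b₁, …, bₙ` are
positive, let `u < n` be the last index with `bᵤ < bₙ`. The last block is then `(u, n]`:
`p_m = (bₙ - bᵤ) x_{u+1}` and `q_m` is the rest of the block, whose partial sums `b_w - bₙ` are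
nonnegative by the choice of `u` and whose total is `0`. The prefix `(0, u]` still has positive
partial sums, so the decomposition follows by strong induction on `n`.
-/

open Finset

lemma IsNumericalSemigroup.exists_pos_mem {S : Set ℕ} (hS : IsNumericalSemigroup S) :
    ∃ M ∈ S, 0 < M := by
  simpa using hS.2.2.infinite_compl.exists_gt 0

lemma admissible_iterate_of_lt_adDeg {p : List ℤ} {k : ℕ} (hk : (k : ℕ∞) < adDeg p) :
    Admissible (pderiv^[k] p) := by
  by_contra h
  exact (sInf_le ⟨k, h, rfl⟩ : adDeg p ≤ k).not_gt hk

lemma psum_cons_succ (a : ℤ) (q : List ℤ) (k : ℕ) : psum (a :: q) (k + 1) = a + psum q k := by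
  simp only [psum, sum_range_succ', List.getD_cons_succ, List.getD_cons_zero]
  ring

lemma psum_nonneg_of_admissible {p : List ℤ} (hp : Admissible p) {k : ℕ} (hk : k ≤ p.length) :
    0 ≤ psum p k := by
  obtain ⟨S, hS, hadm⟩ := hp
  obtain ⟨M, hMS, hM⟩ := hS.exists_pos_mem
  obtain ⟨v, -, hv⟩ := hadm (fun i => if i < k then M else 0)
    (fun i => by split_ifs; exacts [hMS, hS.1]) (fun i j hij => by split_ifs <;> omega)
  have heval : patEval p (fun i => if i < k then M else 0) = psum p k * M := by
    have htail : ∑ i ∈ Ico k p.length, p.getD i 0 * ((if i < k then M else 0 : ℕ) : ℤ) = 0 :=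
      sum_eq_zero fun i hi => by simp [(mem_Ico.mp hi).1.not_gt]
    rw [patEval, psum, sum_mul, ← sum_range_add_sum_Ico _ hk, htail, add_zero]
    exact sum_congr rfl fun i hi => by simp [mem_range.mp hi]
  have hMz : (0 : ℤ) < M := by exact_mod_cast hM
  have hvz : (0 : ℤ) ≤ v := by positivity
  nlinarith

lemma one_le_psum_of_admissible_pderiv {p : List ℤ} (hp : Admissible (pderiv p)) {k : ℕ}
    (hk1 : 1 ≤ k) (hk : k ≤ p.length) : 1 ≤ psum p k := by
  obtain _ | ⟨a, q⟩ := p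
  · simp at hk; omega
  obtain ⟨k, rfl⟩ : ∃ k', k = k' + 1 := ⟨k - 1, by omega⟩
  simp only [List.length_cons] at hk
  rw [psum_cons_succ]
  simp only [pderiv] at hp
  split_ifs at hp with ha
  · linarith [psum_nonneg_of_admissible hp (k := k) (by omega)]
  · have := psum_nonneg_of_admissible hp (k := k + 1) (by simp; omega)
    rw [psum_cons_succ] at this
    linarith

lemma sum_Ioc_coeffFn (p : List ℤ) (v : ℕ) : ∑ i ∈ Ioc 0 v, coeffFn p i = psum p v := by
  induction v with
  | zero => simp [psum]
  | succ v ih =>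
    rw [sum_Ioc_succ_top (Nat.zero_le v), ih, psum, psum, sum_range_succ]
    simp [coeffFn]

lemma coeffFn_eq_ite (p : List ℤ) (i : ℕ) :
    coeffFn p i = if i ∈ Ioc 0 p.length then coeffFn p i else 0 := by
  split_ifs with hi
  · rfl
  · rw [mem_Ioc, not_and_or, not_lt, not_le] at hi
    rcases hi with hi | hi
    · simp [coeffFn, Nat.le_zero.mp hi]
    · rw [coeffFn, if_neg (by omega)]
      exact List.getD_eq_default _ _ (by omega)

def IsPosZeroSumBlock (P Q : ℕ → ℤ) (s h t : ℕ) : Prop :=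
  s < h ∧ h ≤ t ∧
  (∀ i : ℕ, i ∉ Icc (s + 1) h → P i = 0) ∧
  (∀ i ∈ Icc (s + 1) h, 0 < P i) ∧
  (∀ i : ℕ, i ∉ Icc h t → Q i = 0) ∧
  (∀ u ∈ Icc h t, 0 ≤ ∑ i ∈ Icc h u, Q i) ∧
  ∑ i ∈ Icc h t, Q i = 0

lemma exists_isPosZeroSumBlock (c : ℕ → ℤ) {u n : ℕ} (hun : u < n)
    (hpos : 0 < ∑ i ∈ Ioc u n, c i) (htail : ∀ w ∈ Ioc u n, ∑ i ∈ Ioc w n, c i ≤ 0) :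
    ∃ P Q : ℕ → ℤ, IsPosZeroSumBlock P Q u (u + 1) n ∧
      ∀ i, P i + Q i = if i ∈ Ioc u n then c i else 0 := by
  set d := ∑ i ∈ Ioc u n, c i
  set P : ℕ → ℤ := fun i => if i = u + 1 then d else 0
  have hQsum : ∀ w ∈ Icc (u + 1) n,
      ∑ i ∈ Icc (u + 1) w, ((if i ∈ Ioc u n then c i else 0) - P i) = -∑ i ∈ Ioc w n, c i := by
    intro w hw
    rw [mem_Icc] at hw
    rw [sum_sub_distrib, Icc_add_one_left_eq_Ioc, sum_ite_eq' _ (u + 1), if_pos (by simp; omega),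
      sum_congr rfl fun i hi => if_pos (by simp at hi ⊢; omega)]
    linarith [sum_Ioc_consecutive c (by omega : u ≤ w) hw.2]
  refine ⟨P, fun i => (if i ∈ Ioc u n then c i else 0) - P i,
    ⟨by omega, by omega, ?_, ?_, ?_, ?_, ?_⟩, fun i => by ring⟩
  · intro i hi
    simp only [P, if_neg (show i ≠ u + 1 by rintro rfl; simp at hi)]
  · intro i hi
    simp only [P, if_pos (show i = u + 1 by simp at hi; omega), hpos]
  · intro i hi
    simp only [mem_Icc, not_and_or, not_le] at hi
    simp only [P, if_neg (show i ∉ Ioc u n by simp; omega), if_neg (show i ≠ u + 1 by omega)]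
    ring
  · intro w hw
    rw [hQsum w hw]
    exact neg_nonneg.mpr (htail w (by simp at hw ⊢; omega))
  · rw [hQsum n (by simp; omega)]
    simp

theorem exists_isPosZeroSumBlock_decomposition (c : ℕ → ℤ) (n : ℕ)
    (hpos : ∀ v ∈ Ioc 0 n, 0 < ∑ i ∈ Ioc 0 v, c i) :
    ∃ (m : ℕ) (P Q : ℕ → ℕ → ℤ) (h t : ℕ → ℕ), t 0 = 0 ∧ t m = n ∧
      (∀ i, (if i ∈ Ioc 0 n then c i else 0) = ∑ j ∈ Icc 1 m, (P j i + Q j i)) ∧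
      ∀ j ∈ Icc 1 m, IsPosZeroSumBlock (P j) (Q j) (t (j - 1)) (h j) (t j) := by
  induction n using Nat.strong_induction_on with
  | _ n ih =>
  rcases Nat.eq_zero_or_pos n with rfl | hn
  · exact ⟨0, 0, 0, 0, 0, rfl, rfl, by simp, by simp⟩
  set u := Nat.findGreatest (fun v => 0 < ∑ i ∈ Ioc v n, c i) (n - 1)
  have hun : u < n := (Nat.findGreatest_le (n - 1)).trans_lt (by omega)
  have hu : 0 < ∑ i ∈ Ioc u n, c i :=
    Nat.findGreatest_spec (P := fun v => 0 < ∑ i ∈ Ioc v n, c i) (Nat.zero_le _)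
      (hpos n (by simp; omega))
  have htail : ∀ w ∈ Ioc u n, ∑ i ∈ Ioc w n, c i ≤ 0 := by
    intro w hw
    rw [mem_Ioc] at hw
    rcases hw.2.eq_or_lt with rfl | hwn
    · simp
    · exact not_lt.mp (Nat.findGreatest_is_greatest hw.1 (by omega))
  obtain ⟨m, P, Q, h, t, ht0, htm, hsum, hblock⟩ :=
    ih u hun fun v hv => hpos v (by simp at hv ⊢; omega)
  obtain ⟨P₀, Q₀, hblock₀, hsum₀⟩ := exists_isPosZeroSumBlock c hun hu htail
  refine ⟨m + 1, Function.update P (m + 1) P₀, Function.update Q (m + 1) Q₀,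
    Function.update h (m + 1) (u + 1), Function.update t (m + 1) n,
    by simpa using ht0, by simp, fun i => ?_, fun j hj => ?_⟩
  · rw [sum_Icc_succ_top (by omega), sum_congr rfl fun j hj => by
      rw [Function.update_of_ne (by simp at hj; omega), Function.update_of_ne (by simp at hj; omega)]]
    simp only [Function.update_self, hsum₀, ← hsum, mem_Ioc]
    split_ifs <;> omega
  · rcases (mem_Icc.mp hj).2.eq_or_lt with rfl | hjm
    · simpa [htm] using hblock₀
    · simpa [Function.update_of_ne (show j ≠ m + 1 by omega),
        Function.update_of_ne (show j - 1 ≠ m + 1 by omega)] using hblock j (by simp at hj ⊢; omega)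

theorem stmt_3_general (p : List ℤ) (hne : p ≠ [])
    (hstrong : 2 ≤ adDeg p) :
    ∃ m : ℕ, 1 ≤ m ∧ ∃ (P Q : ℕ → ℕ → ℤ) (h t : ℕ → ℕ),
      t 0 = 0 ∧ t m = p.length ∧
      (∀ i : ℕ, coeffFn p i = ∑ j ∈ Finset.Icc 1 m, (P j i + Q j i)) ∧
      ∀ j ∈ Finset.Icc 1 m,
        -- pⱼ occupies the block {t(j−1)+1,…,h j}, with positive coefficients
        t (j - 1) < h j ∧ h j ≤ t j ∧
        (∀ i : ℕ, i ∉ Finset.Icc (t (j - 1) + 1) (h j) → P j i = 0) ∧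
        (∀ i ∈ Finset.Icc (t (j - 1) + 1) (h j), 0 < P j i) ∧
        -- qⱼ occupies the block {h j,…,t j}, admissible with coefficient sum zero
        (∀ i : ℕ, i ∉ Finset.Icc (h j) (t j) → Q j i = 0) ∧
        (∀ u ∈ Finset.Icc (h j) (t j), 0 ≤ ∑ i ∈ Finset.Icc (h j) u, Q j i) ∧
        (∑ i ∈ Finset.Icc (h j) (t j), Q j i) = 0 := by
  have hpos : ∀ v ∈ Ioc 0 p.length, 0 < ∑ i ∈ Ioc 0 v, coeffFn p i := by
    intro v hv
    rw [sum_Ioc_coeffFn]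
    have hadm : Admissible (pderiv p) :=
      admissible_iterate_of_lt_adDeg (k := 1) (lt_of_lt_of_le (by norm_num) hstrong)
    exact one_le_psum_of_admissible_pderiv hadm (mem_Ioc.mp hv).1 (mem_Ioc.mp hv).2
  obtain ⟨m, P, Q, h, t, ht0, htm, hcoeff, hblock⟩ :=
    exists_isPosZeroSumBlock_decomposition (coeffFn p) p.length hpos
  have hm : 1 ≤ m := by
    by_contra hm0
    obtain rfl : m = 0 := by omega
    exact hne (List.length_eq_zero_iff.mp (htm.symm.trans ht0))
  exact ⟨m, hm, P, Q, h, t, ht0, htm, fun i => (coeffFn_eq_ite p i).trans (hcoeff i), hblock⟩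

/-- Any non-zero strongly admissible pattern p decomposes as
p = p₁ + q₁ + ⋯ + p_m + q_m in consecutive blocks of variables, where each pⱼ
has positive coefficients and each qⱼ is admissible with coefficient sum zero. -/
theorem stmt_3 (p : List ℤ) (hp : ∀ a ∈ p, a ≠ 0) (hne : p ≠ [])
    (hstrong : 2 ≤ adDeg p) :
    ∃ m : ℕ, 1 ≤ m ∧ ∃ (P Q : ℕ → ℕ → ℤ) (h t : ℕ → ℕ),
      t 0 = 0 ∧ t m = p.length ∧
      (∀ i : ℕ, coeffFn p i = ∑ j ∈ Finset.Icc 1 m, (P j i + Q j i)) ∧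
      ∀ j ∈ Finset.Icc 1 m,
        -- pⱼ occupies the block {t(j−1)+1,…,h j}, with positive coefficients
        t (j - 1) < h j ∧ h j ≤ t j ∧
        (∀ i : ℕ, i ∉ Finset.Icc (t (j - 1) + 1) (h j) → P j i = 0) ∧
        (∀ i ∈ Finset.Icc (t (j - 1) + 1) (h j), 0 < P j i) ∧
        -- qⱼ occupies the block {h j,…,t j}, admissible with coefficient sum zero
        (∀ i : ℕ, i ∉ Finset.Icc (h j) (t j) → Q j i = 0) ∧
        (∀ u ∈ Finset.Icc (h j) (t j), 0 ≤ ∑ i ∈ Finset.Icc (h j) u, Q j i) ∧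
        (∑ i ∈ Finset.Icc (h j) (t j), Q j i) = 0 :=
  stmt_3_general p hne hstrong
end

section
/- Let S be a numerical semigroup admitting a pattern p with leading coefficient a₁ ≥ 2 (p not monic) and admissibility degree at least 3, and let E be a semigroup ideal of S. Then S ⋈ᵈ E admits p eventually with respect to d. -/
/-- The numerical duplication S ⋈ᵈ E = 2·S ∪ (2·E + d). -/
def numDup (S E : Set ℕ) (d : ℕ) : Set ℕ :=
  {x | ∃ s ∈ S, x = 2 * s} ∪ {x | ∃ e ∈ E, x = 2 * e + d}

/-- S ⋈ᵈ E admits p eventually with respect to d. -/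
def EventuallyAdmits (S E : Set ℕ) (p : List ℤ) : Prop :=
  ∃ d' : ℕ, ∀ d : ℕ, d ∈ S → Odd d → d' ≤ d → AdmitsPat (numDup S E d) p

/-- The relative ideal E − E = {z ∈ ℤ : z + E ⊆ E}. -/
def EmE (E : Set ℕ) : Set ℤ :=
  {z : ℤ | ∀ e ∈ E, ∃ f ∈ E, (f : ℤ) = z + (e : ℤ)}

/-- The conductor c(E) = min{x ∈ ℕ : x + ℕ ⊆ E}. -/
noncomputable def condOf (E : Set ℕ) : ℕ :=
  sInf {c : ℕ | ∀ x : ℕ, c ≤ x → x ∈ E}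

/-!
The partial sums `bᵢ` of `p` are all at least `2`: `a₁ ≥ 2` and `p''` is admissible. By Abel
summation this gives `p(t) ≥ 2 t₁` for every non-increasing `t`. In `S ⋈ᵈ E`, if the
arguments `t₁ ≥ ⋯ ≥ tₙ` are all in `2·S`, then `p(t) = 2 p(t/2) ∈ 2·S`; otherwise `t₁ ≥ d`,
so `p(t) ≥ 2d`, and once `d` exceeds twice the conductors of `S` and `E`, every integer
`≥ 2d` lies in `S ⋈ᵈ E`.
-/

open Finset

lemma exists_forall_ge_mem_of_finite_compl {S : Set ℕ} (h : Sᶜ.Finite) :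
    ∃ c, ∀ x, c ≤ x → x ∈ S := by
  obtain ⟨N, hN⟩ := h.bddAbove
  exact ⟨N + 1, fun x hx => by_contra fun hxS => by have := hN hxS; omega⟩

lemma forall_ge_mem_of_isIdeal {S E : Set ℕ} (hE : ∀ e ∈ E, ∀ s ∈ S, e + s ∈ E) {c e : ℕ}
    (hc : ∀ x, c ≤ x → x ∈ S) (he : e ∈ E) : ∀ x, e + c ≤ x → x ∈ E := fun x hx => by
  simpa [Nat.add_sub_cancel' (show e ≤ x by omega)] using hE e he (x - e) (hc _ (by omega))

lemma psum_cons (a : ℤ) (q : List ℤ) (i : ℕ) : psum (a :: q) (i + 1) = a + psum q i := by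
  simp [psum, Finset.sum_range_succ', add_comm]

lemma patEval_const_mul (p : List ℤ) (k : ℕ) (u : ℕ → ℕ) :
    patEval p (fun i => k * u i) = k * patEval p u := by
  simp only [patEval, Finset.mul_sum]
  refine Finset.sum_congr rfl fun i _ => ?_
  push_cast
  ring

lemma patEval_congr {p : List ℤ} {s t : ℕ → ℕ} (h : ∀ i < p.length, s i = t i) :
    patEval p s = patEval p t :=
  Finset.sum_congr rfl fun i hi => by rw [h i (Finset.mem_range.mp hi)]

lemma patEval_indicator (p : List ℤ) {i : ℕ} (hi : i ≤ p.length) (M : ℕ) :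
    patEval p (fun j => if j < i then M else 0) = psum p i * M := by
  rw [patEval, psum, Finset.sum_mul,
    ← Finset.sum_range_add_sum_Ico _ hi, Finset.sum_eq_zero (s := Ico i p.length)]
  · rw [add_zero]
    exact Finset.sum_congr rfl fun j hj => by simp [Finset.mem_range.mp hj]
  · intro j hj
    simp [(Finset.mem_Ico.mp hj).1]

lemma Admissible.psum_nonneg {r : List ℤ} (h : Admissible r) {i : ℕ} (hi : i ≤ r.length) :
    0 ≤ psum r i := by
  obtain ⟨S, ⟨h0, -, hfin⟩, hadm⟩ := h
  obtain ⟨c, hc⟩ := exists_forall_ge_mem_of_finite_compl hfin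
  obtain ⟨m, -, hm⟩ := hadm (fun j => if j < i then c + 1 else 0)
    (fun j => by split_ifs; exacts [hc _ (by omega), h0])
    (fun j k hjk => by split_ifs <;> omega)
  rw [patEval_indicator r hi] at hm
  have : (0 : ℤ) ≤ psum r i * (c + 1 : ℕ) := hm ▸ m.cast_nonneg
  exact nonneg_of_mul_nonneg_left this (by positivity)

lemma admissible_iterate_pderiv_of_lt_adDeg {p : List ℤ} {m : ℕ} (hm : (m : ℕ∞) < adDeg p) :
    Admissible (pderiv^[m] p) :=
  by_contra fun h => (sInf_le (Set.mem_image_of_mem _ h)).not_gt hm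

lemma pderiv_cons_of_ne_one {a : ℤ} (ha : a ≠ 1) (q : List ℤ) :
    pderiv (a :: q) = (a - 1) :: q :=
  if_neg ha

lemma two_le_psum_of_three_le_adDeg {p : List ℤ} (hnm : 2 ≤ p.getD 0 0) (hdeg : 3 ≤ adDeg p)
    {i : ℕ} (hi : i < p.length) : 2 ≤ psum p (i + 1) := by
  obtain _ | ⟨a, q⟩ := p
  · simp at hi
  simp only [List.getD_cons_zero] at hnm
  simp only [List.length_cons] at hi
  have hadm : Admissible (pderiv ((a - 1) :: q)) := by
    rw [← pderiv_cons_of_ne_one (by omega)]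
    exact admissible_iterate_pderiv_of_lt_adDeg (p := a :: q) (m := 2)
      (lt_of_lt_of_le (by norm_num) hdeg)
  rw [psum_cons]
  by_cases ha : a - 1 = 1
  · rw [show pderiv ((a - 1) :: q) = q from if_pos ha] at hadm
    have := hadm.psum_nonneg (i := i) (by omega)
    omega
  · rw [pderiv_cons_of_ne_one ha] at hadm
    have := hadm.psum_nonneg (i := i + 1) (by simp; omega)
    rw [psum_cons] at this
    omega

/-- Abel summation: `p(t) = bₙ tₙ + ∑ᵢ bᵢ (tᵢ - tᵢ₊₁)` with nonnegative increments. -/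
lemma mul_le_patEval {p : List ℤ} (hp : p ≠ []) {B : ℤ}
    (hB : ∀ i < p.length, B ≤ psum p (i + 1)) {t : ℕ → ℕ} (ht : Antitone t) :
    B * t 0 ≤ patEval p t := by
  set n := p.length
  have hn : n - 1 + 1 = n := Nat.sub_add_cancel (List.length_pos_iff.mpr hp)
  have hparts : patEval p t = t (n - 1) * psum p n +
      ∑ i ∈ range (n - 1), ((t i : ℤ) - t (i + 1)) * psum p (i + 1) := by
    have := Finset.sum_range_by_parts (fun i => (t i : ℤ)) (fun i => p.getD i 0) n
    simp only [smul_eq_mul] at this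
    rw [patEval, Finset.sum_congr rfl fun i _ => mul_comm (p.getD i 0) (t i : ℤ), this,
      sub_eq_add_neg, ← Finset.sum_neg_distrib]
    congr 1
    exact Finset.sum_congr rfl fun i _ => by simp only [psum]; ring
  have htele : ∑ i ∈ range (n - 1), ((t i : ℤ) - t (i + 1)) = t 0 - t (n - 1) :=
    Finset.sum_range_sub' (fun i => (t i : ℤ)) (n - 1)
  have hterm : ∀ i ∈ range (n - 1),
      B * ((t i : ℤ) - t (i + 1)) ≤ ((t i : ℤ) - t (i + 1)) * psum p (i + 1) := fun i hi => by
    rw [mul_comm]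
    refine mul_le_mul_of_nonneg_left (hB i (by simp at hi; omega)) ?_
    exact sub_nonneg.mpr (by exact_mod_cast ht (Nat.le_succ i))
  have hlast : B * t (n - 1) ≤ t (n - 1) * psum p n := by
    rw [mul_comm]
    exact mul_le_mul_of_nonneg_left (hn ▸ hB (n - 1) (by omega)) (by positivity)
  calc B * t 0 = B * t (n - 1) + ∑ i ∈ range (n - 1), B * ((t i : ℤ) - t (i + 1)) := by
        rw [← Finset.mul_sum, htele]; ring
    _ ≤ patEval p t := hparts ▸ add_le_add hlast (Finset.sum_le_sum hterm)

section NumericalDuplication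

variable {S E : Set ℕ} {d : ℕ}

lemma le_of_mem_numDup {x : ℕ} (hx : x ∈ numDup S E d) (hodd : ∀ s ∈ S, x ≠ 2 * s) : d ≤ x := by
  obtain ⟨s, hs, rfl⟩ | ⟨e, -, rfl⟩ := hx
  · exact absurd rfl (hodd s hs)
  · omega

lemma mem_numDup_of_two_mul_le {c N : ℕ} (hS : ∀ x, c ≤ x → x ∈ S) (hE : ∀ x, c ≤ x → x ∈ E)
    (hd : Odd d) (hcd : 2 * c < d) (hN : 2 * d ≤ N) : N ∈ numDup S E d := by
  obtain ⟨l, rfl⟩ := hd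
  obtain ⟨k, rfl | rfl⟩ := N.even_or_odd'
  · exact Or.inl ⟨k, hS k (by omega), rfl⟩
  · exact Or.inr ⟨k - l, hE _ (by omega), by omega⟩

lemma AdmitsPat.exists_mem_numDup_of_forall_even {p : List ℤ} (hSp : AdmitsPat S p)
    (h0 : 0 ∈ S) {t : ℕ → ℕ} (ht : Antitone t) (heven : ∀ i < p.length, ∃ s ∈ S, t i = 2 * s) :
    ∃ m ∈ numDup S E d, (m : ℤ) = patEval p t := by
  set u : ℕ → ℕ := fun i => if i < p.length then t i / 2 else 0
  have hu : ∀ i < p.length, t i = 2 * u i := fun i hi => by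
    obtain ⟨s, -, hs⟩ := heven i hi
    simp only [u, if_pos hi]
    omega
  obtain ⟨m, hm, hmu⟩ := hSp u
    (fun i => by
      by_cases hi : i < p.length
      · obtain ⟨s, hs, hts⟩ := heven i hi
        simpa [u, hi, hts] using hs
      · simpa [u, hi] using h0)
    (fun i j hij => by
      simp only [u]
      split_ifs <;> first | omega | exact Nat.div_le_div_right (ht hij))
  refine ⟨2 * m, Or.inl ⟨m, hm, rfl⟩, ?_⟩
  rw [patEval_congr hu, patEval_const_mul, ← hmu]
  push_cast
  ring

end NumericalDuplication

theorem stmt_18_general (S E : Set ℕ) (hS : IsNumericalSemigroup S)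
    (hE : ∀ e ∈ E, ∀ s ∈ S, e + s ∈ E) (hEne : E.Nonempty)
    (p : List ℤ)
    (hnm : 2 ≤ p.getD 0 0) (hdeg : 3 ≤ adDeg p)
    (hSp : AdmitsPat S p) :
    EventuallyAdmits S E p := by
  obtain ⟨h0, -, hfin⟩ := hS
  obtain ⟨cS, hcS⟩ := exists_forall_ge_mem_of_finite_compl hfin
  obtain ⟨e, he⟩ := hEne
  have hcE := forall_ge_mem_of_isIdeal hE hcS he
  have hp : p ≠ [] := by rintro rfl; simp at hnm
  refine ⟨2 * (e + cS) + 1, fun d _ hd hcd t htmem ht => ?_⟩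
  by_cases heven : ∀ i < p.length, ∃ s ∈ S, t i = 2 * s
  · exact hSp.exists_mem_numDup_of_forall_even h0 ht heven
  push Not at heven
  obtain ⟨i, -, hodd⟩ := heven
  have hdt : d ≤ t 0 := (le_of_mem_numDup (htmem i) hodd).trans (ht 0 i (Nat.zero_le i))
  have hP : 2 * (t 0 : ℤ) ≤ patEval p t :=
    mul_le_patEval hp (fun i hi => two_le_psum_of_three_le_adDeg hnm hdeg hi) ht
  refine ⟨(patEval p t).toNat, ?_, Int.toNat_of_nonneg (by omega)⟩
  exact mem_numDup_of_two_mul_le (fun x hx => hcS x (by omega)) hcE hd (by omega) (by omega)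

/-- If S admits a non-monic pattern p (leading coefficient a₁ ≥ 2) of
admissibility degree at least 3, then S ⋈ᵈ E admits p eventually with
respect to d. -/
theorem stmt_18 (S E : Set ℕ) (hS : IsNumericalSemigroup S)
    (hES : E ⊆ S) (hE : ∀ e ∈ E, ∀ s ∈ S, e + s ∈ E) (hEne : E.Nonempty)
    (p : List ℤ) (hp : ∀ a ∈ p, a ≠ 0)
    (hnm : 2 ≤ p.getD 0 0) (hdeg : 3 ≤ adDeg p)
    (hSp : AdmitsPat S p) :
    EventuallyAdmits S E p :=
  stmt_18_general S E hS hE hEne p hnm hdeg hSp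
end
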